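/- Suppose the training data is linearly separable and lim_{B→∞} w̄(B)/B = ū for some unit vector ū. Then for every α > 0 there exists ρ(α) > 0 such that for every w ∈ ℝ^d with ‖w‖ > ρ(α), R((1+α)‖w‖ ū) ≤ R(w). -/

import Mathlib

/-!
If some margin of the limit direction `ū` were `≤ 0`, then for large `B` the minimizer `w̄(B)`
would have margin at most `ε B` on some example. Moving `w̄(B)` a fraction `ε` towards `B u`,
where `u` separates the data with margin `γ`, stays in the ball, gains at least
`ε (γ - ε) B |ℓ'(2 ε B)|` on that example and loses at most `ε B |ℓ'(γ B)|` on every other one.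
With `ε` small, optimality forces `h z = z |ℓ'(z)|` to be nondecreasing along a geometric
sequence of ratio `γ / 2ε > 1`; but `0 < h z ≤ 2 (ℓ (z / 2) - ℓ z) → 0` by convexity. So all
margins of `ū` are positive, hence for large `B` every margin of `w̄(B)` lies below the
corresponding margin of `(1 + α) B ū`, and `R((1 + α) ‖w‖ ū) ≤ R(w̄(‖w‖)) ≤ R(w)`.
-/

open Filter RealInnerProductSpace

open Metric Set Topology

namespace ConvexOn

variable {ℓ : ℝ → ℝ}

theorem monotone_deriv_of_differentiable (hconv : ConvexOn ℝ univ ℓ)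
    (hdiff : Differentiable ℝ ℓ) : Monotone (deriv ℓ) :=
  monotoneOn_univ.1 (hconv.monotoneOn_deriv fun z _ => hdiff z)

theorem add_deriv_mul_sub_le (hconv : ConvexOn ℝ univ ℓ) (hdiff : Differentiable ℝ ℓ)
    (a b : ℝ) : ℓ a + deriv ℓ a * (b - a) ≤ ℓ b := by
  rcases lt_trichotomy a b with hab | rfl | hba
  · have h := hconv.deriv_le_slope (mem_univ a) (mem_univ b) hab (hdiff a)
    rw [slope_def_field, le_div_iff₀ (sub_pos.2 hab)] at h
    linarith
  · simp
  · have h := hconv.slope_le_deriv (mem_univ b) (mem_univ a) hba (hdiff a)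
    rw [slope_def_field, div_le_iff₀ (sub_pos.2 hba)] at h
    linarith

theorem deriv_neg_of_strictAnti (hconv : ConvexOn ℝ univ ℓ) (hdiff : Differentiable ℝ ℓ)
    (hanti : StrictAnti ℓ) (t : ℝ) : deriv ℓ t < 0 := by
  have h := hconv.deriv_le_slope (mem_univ t) (mem_univ (t + 1)) (lt_add_one t) (hdiff t)
  rw [slope_def_field, add_sub_cancel_left, div_one] at h
  linarith [hanti (lt_add_one t)]

theorem neg_deriv_mul_sub_le_sub (hconv : ConvexOn ℝ univ ℓ) (hdiff : Differentiable ℝ ℓ)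
    {t a z : ℝ} (hta : t ≤ a) (haz : a ≤ z) :
    -deriv ℓ z * (a - t) ≤ ℓ t - ℓ a := by
  have htan := hconv.add_deriv_mul_sub_le hdiff a t
  have hmono := mul_le_mul_of_nonneg_right
    (hconv.monotone_deriv_of_differentiable hdiff haz) (sub_nonneg.2 hta)
  linarith

theorem apply_convex_comb_sub_le (hconv : ConvexOn ℝ univ ℓ) (hdiff : Differentiable ℝ ℓ)
    (hanti : Antitone ℓ) {s t b c D : ℝ} (hs0 : 0 ≤ s) (hs1 : s ≤ 1)
    (hcb : c ≤ b) (htb : t - b ≤ D) (hD : 0 ≤ D) :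
    ℓ ((1 - s) * t + s * b) - ℓ t ≤ s * D * -deriv ℓ c := by
  set a := (1 - s) * t + s * b
  have htan : ℓ a - ℓ t ≤ -deriv ℓ a * (s * (t - b)) := by
    have h := hconv.add_deriv_mul_sub_le hdiff a t
    have e : t - a = s * (t - b) := by ring
    rw [e] at h
    linarith
  have hφa : 0 ≤ -deriv ℓ a := neg_nonneg.2 hanti.deriv_nonpos
  have hφc : 0 ≤ -deriv ℓ c := neg_nonneg.2 hanti.deriv_nonpos
  rcases le_or_gt t b with htb' | hbt
  · have : -deriv ℓ a * (s * (t - b)) ≤ 0 :=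
      mul_nonpos_of_nonneg_of_nonpos hφa (mul_nonpos_of_nonneg_of_nonpos hs0 (by linarith))
    have : 0 ≤ s * D * -deriv ℓ c := mul_nonneg (mul_nonneg hs0 hD) hφc
    linarith
  · have hca : c ≤ a := hcb.trans (by nlinarith)
    calc ℓ a - ℓ t ≤ -deriv ℓ a * (s * (t - b)) := htan
      _ ≤ -deriv ℓ c * (s * D) :=
        mul_le_mul (neg_le_neg (hconv.monotone_deriv_of_differentiable hdiff hca))
          (mul_le_mul_of_nonneg_left htb hs0) (by nlinarith) hφc
      _ = s * D * -deriv ℓ c := by ring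

theorem tendsto_mul_neg_deriv_atTop (hconv : ConvexOn ℝ univ ℓ) (hdiff : Differentiable ℝ ℓ)
    (hanti : Antitone ℓ) (hlim : Tendsto ℓ atTop (𝓝 0)) :
    Tendsto (fun z => z * -deriv ℓ z) atTop (𝓝 0) := by
  have hupper : Tendsto (fun z => 2 * (ℓ (z / 2) - ℓ z)) atTop (𝓝 0) := by
    simpa using ((hlim.comp (tendsto_id.atTop_div_const two_pos)).sub hlim).const_mul 2
  refine tendsto_of_tendsto_of_tendsto_of_le_of_le' tendsto_const_nhds hupper ?_ ?_
  · filter_upwards [eventually_ge_atTop 0] with z hz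
    exact mul_nonneg hz (neg_nonneg.2 hanti.deriv_nonpos)
  · refine Eventually.of_forall fun z => ?_
    have := hconv.add_deriv_mul_sub_le hdiff z (z / 2)
    linarith

end ConvexOn

theorem nonpos_of_tendsto_zero_of_le_comp_mul {h : ℝ → ℝ} (hh : Tendsto h atTop (𝓝 0))
    {c z₀ : ℝ} (hc : 1 < c) (hz₀ : 0 < z₀) (hle : ∀ z, z₀ ≤ z → h z ≤ h (c * z)) :
    h z₀ ≤ 0 := by
  have hge : ∀ m : ℕ, z₀ ≤ c ^ m * z₀ := fun m =>
    le_mul_of_one_le_left hz₀.le (one_le_pow₀ hc.le)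
  have hmono : ∀ m : ℕ, h z₀ ≤ h (c ^ m * z₀) := by
    intro m
    induction m with
    | zero => simp
    | succ m ih => exact ih.trans ((hle _ (hge m)).trans_eq (by rw [pow_succ', mul_assoc]))
  exact ge_of_tendsto'
    (hh.comp ((tendsto_pow_atTop_atTop_of_one_lt hc).atTop_mul_const hz₀)) hmono

theorem sub_le_card_mul_of_sum_le {ι : Type*} [Fintype ι] {f g : ι → ℝ} {M : ℝ}
    (hsum : ∑ i, f i ≤ ∑ i, g i) (hM : ∀ i, g i - f i ≤ M) (hM0 : 0 ≤ M) (j : ι) :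
    f j - g j ≤ Fintype.card ι * M := by
  classical
  have hsplit := Finset.add_sum_erase Finset.univ (fun i => g i - f i) (Finset.mem_univ j)
  have htotal : 0 ≤ ∑ i, (g i - f i) := by rw [Finset.sum_sub_distrib]; linarith
  have hrest : ∑ i ∈ Finset.univ.erase j, (g i - f i) ≤ Fintype.card ι * M :=
    calc ∑ i ∈ Finset.univ.erase j, (g i - f i) ≤ ∑ i ∈ Finset.univ.erase j, M :=
          Finset.sum_le_sum fun i _ => hM i
      _ ≤ ∑ _i : ι, M :=
          Finset.sum_le_sum_of_subset_of_nonneg (Finset.erase_subset _ _) fun _ _ _ => hM0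
      _ = Fintype.card ι * M := by simp
  linarith

section EmpiricalRisk

variable {ι E : Type*} [NormedAddCommGroup E] [InnerProductSpace ℝ E]
  {ℓ : ℝ → ℝ} {x : ι → E} {y : ι → ℝ}

theorem abs_mul_inner_le {a : ℝ} {v : E} (ha : |a| ≤ 1) (hv : ‖v‖ ≤ 1) (w : E) :
    |a * ⟪w, v⟫| ≤ ‖w‖ := by
  rw [abs_mul]
  calc |a| * |⟪w, v⟫| ≤ 1 * (‖w‖ * 1) :=
        mul_le_mul ha ((abs_real_inner_le_norm w v).trans
          (mul_le_mul_of_nonneg_left hv (norm_nonneg w))) (abs_nonneg _) zero_le_one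
    _ = ‖w‖ := by ring

theorem eventually_margin_lt {wbar : ℝ → E} {ubar : E}
    (hlim : Tendsto (fun B : ℝ => B⁻¹ • wbar B) atTop (𝓝 ubar)) (i : ι) {c : ℝ}
    (hc : y i * ⟪ubar, x i⟫ < c) : ∀ᶠ B in atTop, y i * ⟪wbar B, x i⟫ < c * B := by
  have hmargin := ((hlim.inner tendsto_const_nhds).const_mul (y i)).eventually_lt_const hc
  filter_upwards [hmargin, eventually_gt_atTop 0] with B hB hBpos
  rwa [real_inner_smul_left, mul_left_comm, inv_mul_lt_iff₀ hBpos, mul_comm B] at hB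

variable [Fintype ι]

noncomputable def empiricalRisk (ℓ : ℝ → ℝ) (x : ι → E) (y : ι → ℝ) (w : E) : ℝ :=
  (Fintype.card ι : ℝ)⁻¹ * ∑ i, ℓ (y i * ⟪w, x i⟫)

theorem empiricalRisk_le_of_forall_le (hanti : Antitone ℓ) {v w : E}
    (h : ∀ i, y i * ⟪w, x i⟫ ≤ y i * ⟪v, x i⟫) :
    empiricalRisk ℓ x y v ≤ empiricalRisk ℓ x y w := by
  unfold empiricalRisk
  gcongr with i
  exact hanti (h i)

theorem sub_mul_neg_deriv_le_of_margin_le (hconv : ConvexOn ℝ univ ℓ)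
    (hdiff : Differentiable ℝ ℓ) (hanti : Antitone ℓ)
    (hx : ∀ i, ‖x i‖ ≤ 1) (hy : ∀ i, |y i| ≤ 1)
    {u : E} {γ : ℝ} (hu : ‖u‖ ≤ 1) (hγ : ∀ i, γ ≤ y i * ⟪u, x i⟫)
    {w : E} {B : ℝ} (hB : 0 < B) (hw : ‖w‖ ≤ B)
    (hmin : IsMinOn (empiricalRisk ℓ x y) (closedBall 0 B) w)
    {j : ι} {ε : ℝ} (hε : 0 < ε) (hεγ : ε ≤ γ) (hj : y j * ⟪w, x j⟫ ≤ ε * B) :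
    (γ - ε) * -deriv ℓ (2 * ε * B) ≤ Fintype.card ι * -deriv ℓ (γ * B) := by
  set t : ι → ℝ := fun i => y i * ⟪w, x i⟫ with ht
  set g : ι → ℝ := fun i => y i * ⟪u, x i⟫ with hg
  set a : ι → ℝ := fun i => (1 - ε) * t i + ε * (B * g i) with ha
  have hg1 : ∀ i, g i ≤ 1 := fun i =>
    (le_abs_self _).trans ((abs_mul_inner_le (hy i) (hx i) u).trans hu)
  have hε1 : ε ≤ 1 := hεγ.trans ((hγ j).trans (hg1 j))
  have hsum : ∑ i, ℓ (t i) ≤ ∑ i, ℓ (a i) := by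
    have hBu : B • u ∈ closedBall (0 : E) B := by
      rw [mem_closedBall_zero_iff, norm_smul, Real.norm_of_nonneg hB.le]
      exact mul_le_of_le_one_right hB.le hu
    have hv := hmin (convex_closedBall (0 : E) B (mem_closedBall_zero_iff.2 hw) hBu
      (sub_nonneg.2 hε1) hε.le (sub_add_cancel 1 ε))
    have hcard : (0 : ℝ) < (Fintype.card ι : ℝ)⁻¹ := by
      have := Fintype.card_pos_iff.2 ⟨j⟩
      positivity
    refine (le_of_mul_le_mul_left hv hcard).trans_eq (Finset.sum_congr rfl fun i _ => ?_)
    simp only [ha, ht, hg, inner_add_left, real_inner_smul_left]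
    ring_nf
  have hγg : ∀ i, γ * B ≤ B * g i := fun i => by
    rw [mul_comm]; exact mul_le_mul_of_nonneg_left (hγ i) hB.le
  have hγB : 0 ≤ γ * B := mul_nonneg (hε.le.trans hεγ) hB.le
  have hloss : ∀ i, ℓ (a i) - ℓ (t i) ≤ ε * B * -deriv ℓ (γ * B) := fun i => by
    have htB : t i ≤ B := (le_abs_self _).trans ((abs_mul_inner_le (hy i) (hx i) w).trans hw)
    exact hconv.apply_convex_comb_sub_le hdiff hanti hε.le hε1 (hγg i) (by linarith [hγg i]) hB.le
  have hgain : -deriv ℓ (2 * ε * B) * (ε * ((γ - ε) * B)) ≤ ℓ (t j) - ℓ (a j) := by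
    have hgap : ε * ((γ - ε) * B) ≤ a j - t j := by
      have : a j - t j = ε * (B * g j - t j) := by simp only [ha]; ring
      rw [this]
      exact mul_le_mul_of_nonneg_left (by linarith [hγg j]) hε.le
    have haj : a j ≤ 2 * ε * B := by
      have h1 : (1 - ε) * t j ≤ (1 - ε) * (ε * B) := mul_le_mul_of_nonneg_left hj (by linarith)
      have h2 : ε * (B * g j) ≤ ε * B := by
        rw [← mul_assoc]; exact mul_le_of_le_one_right (by positivity) (hg1 j)
      have h3 : 0 ≤ ε * (ε * B) := by positivity
      simp only [ha]; nlinarith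
    have hta : t j ≤ a j := by
      have := mul_nonneg hε.le (mul_nonneg (sub_nonneg.2 hεγ) hB.le)
      linarith
    exact (mul_le_mul_of_nonneg_left hgap (neg_nonneg.2 hanti.deriv_nonpos)).trans
      (hconv.neg_deriv_mul_sub_le_sub hdiff hta haj)
  have hcmp := sub_le_card_mul_of_sum_le hsum hloss
    (mul_nonneg (mul_nonneg hε.le hB.le) (neg_nonneg.2 hanti.deriv_nonpos)) j
  have hεB : 0 < ε * B := mul_pos hε hB
  refine le_of_mul_le_mul_right ?_ hεB
  calc (γ - ε) * -deriv ℓ (2 * ε * B) * (ε * B)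
      = -deriv ℓ (2 * ε * B) * (ε * ((γ - ε) * B)) := by ring
    _ ≤ Fintype.card ι * (ε * B * -deriv ℓ (γ * B)) := hgain.trans hcmp
    _ = Fintype.card ι * -deriv ℓ (γ * B) * (ε * B) := by ring

theorem margin_pos_of_tendsto (hx : ∀ i, ‖x i‖ ≤ 1) (hy : ∀ i, |y i| ≤ 1)
    (hsep : ∃ (u : E) (γ : ℝ), ‖u‖ = 1 ∧ 0 < γ ∧ ∀ i, γ ≤ y i * ⟪u, x i⟫)
    (hconv : ConvexOn ℝ univ ℓ) (hdiff : Differentiable ℝ ℓ) (hanti : StrictAnti ℓ)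
    (hlim0 : Tendsto ℓ atTop (𝓝 0)) {wbar : ℝ → E}
    (hwbar : ∀ B, 0 ≤ B →
      ‖wbar B‖ ≤ B ∧ IsMinOn (empiricalRisk ℓ x y) (closedBall 0 B) (wbar B))
    {ubar : E} (hlim : Tendsto (fun B : ℝ => B⁻¹ • wbar B) atTop (𝓝 ubar)) (i : ι) :
    0 < y i * ⟪ubar, x i⟫ := by
  by_contra! hi
  obtain ⟨u, γ, hu, hγ, hγi⟩ := hsep
  set N : ℝ := (Fintype.card ι : ℝ)
  have hN : 1 ≤ N := Nat.one_le_cast.2 (Fintype.card_pos_iff.2 ⟨i⟩)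
  have hγ1 : γ ≤ 1 :=
    (hγi i).trans ((le_abs_self _).trans ((abs_mul_inner_le (hy i) (hx i) u).trans hu.le))
  set h : ℝ → ℝ := fun z => z * -deriv ℓ z
  -- small enough that `2 ε N ≤ γ (γ - ε)`, which turns the first-order bound into growth of `h`
  set ε := γ ^ 2 / (4 * N) with hεdef
  have hε : 0 < ε := by positivity
  have hεγ : ε ≤ γ / 4 := by
    rw [hεdef, div_le_div_iff₀ (by positivity) (by norm_num)]
    nlinarith
  obtain ⟨B₀, hB₀⟩ := ((eventually_margin_lt hlim i (hi.trans_lt hε)).and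
    (eventually_gt_atTop 0)).exists_forall_of_atTop
  have hB₀pos : 0 < B₀ := (hB₀ B₀ le_rfl).2
  have hgrow : ∀ B, B₀ ≤ B → h (2 * ε * B) ≤ h (γ * B) := by
    intro B hB
    obtain ⟨hj, hBpos⟩ := hB₀ B hB
    have hkey := sub_mul_neg_deriv_le_of_margin_le hconv hdiff hanti.antitone hx hy hu.le hγi
      hBpos (hwbar B hBpos.le).1 (hwbar B hBpos.le).2 hε (by linarith) hj.le
    have hφ : 0 ≤ -deriv ℓ (γ * B) := neg_nonneg.2 hanti.antitone.deriv_nonpos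
    have hεN : 2 * ε * N ≤ γ * (γ - ε) := by
      have : 2 * ε * N = γ ^ 2 / 2 := by rw [hεdef]; field_simp; ring
      nlinarith
    refine le_of_mul_le_mul_left ?_ (by linarith : 0 < γ - ε)
    calc (γ - ε) * h (2 * ε * B) = 2 * ε * B * ((γ - ε) * -deriv ℓ (2 * ε * B)) := by ring
      _ ≤ 2 * ε * B * (N * -deriv ℓ (γ * B)) := by gcongr
      _ = (2 * ε * N) * B * -deriv ℓ (γ * B) := by ring
      _ ≤ (γ * (γ - ε)) * B * -deriv ℓ (γ * B) := by gcongr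
      _ = (γ - ε) * h (γ * B) := by ring
  have hc : 1 < γ / (2 * ε) := (one_lt_div (by positivity)).2 (by linarith)
  have hnonpos := nonpos_of_tendsto_zero_of_le_comp_mul
    (hconv.tendsto_mul_neg_deriv_atTop hdiff hanti.antitone hlim0) hc
    (by positivity : 0 < 2 * ε * B₀) fun z hz => by
      have := hgrow (z / (2 * ε)) ((le_div_iff₀ (by positivity)).2 (by linarith))
      rw [mul_div_cancel₀ z (by positivity)] at this
      show h z ≤ h (γ / (2 * ε) * z)
      rwa [div_mul_eq_mul_div, mul_div_assoc]
  have hpos : 0 < h (2 * ε * B₀) :=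
    mul_pos (by positivity) (neg_pos.2 (hconv.deriv_neg_of_strictAnti hdiff hanti _))
  linarith

end EmpiricalRisk

theorem moving_along_limit_direction_nearly_optimal_general
    {d n : ℕ}
    (x : Fin n → EuclideanSpace ℝ (Fin d)) (y : Fin n → ℝ)
    (hx : ∀ i, ‖x i‖ ≤ 1) (hy : ∀ i, y i = 1 ∨ y i = -1)
    (hsep : ∃ (u : EuclideanSpace ℝ (Fin d)) (γ : ℝ), ‖u‖ = 1 ∧ 0 < γ ∧
      ∀ i, γ ≤ y i * ⟪u, x i⟫)
    (ℓ : ℝ → ℝ)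
    (hconv : ConvexOn ℝ Set.univ ℓ)
    (hdiff : Differentiable ℝ ℓ)
    (hanti : StrictAnti ℓ)
    (hlim0 : Tendsto ℓ atTop (nhds 0))
    (R : EuclideanSpace ℝ (Fin d) → ℝ)
    (hR : R = fun w => (1 / (n : ℝ)) * ∑ i, ℓ (y i * ⟪w, x i⟫))
    (wbar : ℝ → EuclideanSpace ℝ (Fin d))
    (hwbar : ∀ B : ℝ, 0 ≤ B → ‖wbar B‖ ≤ B ∧ ∀ v, ‖v‖ ≤ B → R (wbar B) ≤ R v)
    (ubar : EuclideanSpace ℝ (Fin d))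
    (hlim : Tendsto (fun B : ℝ => B⁻¹ • wbar B) atTop (nhds ubar)) :
    ∀ α : ℝ, 0 < α → ∃ ρ : ℝ, 0 < ρ ∧
      ∀ w : EuclideanSpace ℝ (Fin d), ρ < ‖w‖ →
        R (((1 + α) * ‖w‖) • ubar) ≤ R w := by
  intro α hα
  obtain rfl : R = empiricalRisk ℓ x y := by
    rw [hR]; funext w; simp [empiricalRisk]
  have hy' : ∀ i, |y i| ≤ 1 := fun i => by rcases hy i with h | h <;> simp [h]
  have hmin : ∀ B, 0 ≤ B →
      ‖wbar B‖ ≤ B ∧ IsMinOn (empiricalRisk ℓ x y) (closedBall 0 B) (wbar B) :=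
    fun B hB => ⟨(hwbar B hB).1, fun v hv => (hwbar B hB).2 v (mem_closedBall_zero_iff.1 hv)⟩
  have hpos := margin_pos_of_tendsto hx hy' hsep hconv hdiff hanti hlim0 hmin hlim
  obtain ⟨B₀, hB₀⟩ := (eventually_all.2 fun i => eventually_margin_lt hlim i
    (lt_mul_of_one_lt_left (hpos i) (by linarith : 1 < 1 + α))).exists_forall_of_atTop
  refine ⟨max B₀ 1, by positivity, fun w hw => ?_⟩
  have hmargin := hB₀ ‖w‖ ((le_max_left _ _).trans hw.le)
  calc empiricalRisk ℓ x y (((1 + α) * ‖w‖) • ubar)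
      ≤ empiricalRisk ℓ x y (wbar ‖w‖) :=
        empiricalRisk_le_of_forall_le hanti.antitone fun i => by
          rw [real_inner_smul_left]; linarith [hmargin i]
    _ ≤ empiricalRisk ℓ x y w := (hwbar _ (norm_nonneg w)).2 w le_rfl

/-- For linearly separable data, if the regularization path
converges in direction to a unit vector `ū`, then for every `α > 0` there is a
radius `ρ(α) > 0` such that for every `w` with `‖w‖ > ρ(α)`,
`R((1+α)‖w‖ ū) ≤ R(w)`. -/
theorem moving_along_limit_direction_nearly_optimal
    {d n : ℕ} (hn : 0 < n)
    (x : Fin n → EuclideanSpace ℝ (Fin d)) (y : Fin n → ℝ)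
    (hx : ∀ i, ‖x i‖ ≤ 1) (hy : ∀ i, y i = 1 ∨ y i = -1)
    (hsep : ∃ (u : EuclideanSpace ℝ (Fin d)) (γ : ℝ), ‖u‖ = 1 ∧ 0 < γ ∧
      ∀ i, γ ≤ y i * ⟪u, x i⟫)
    (ℓ : ℝ → ℝ)
    (hconv : ConvexOn ℝ Set.univ ℓ)
    (hdiff : Differentiable ℝ ℓ)
    (hanti : StrictAnti ℓ)
    (hlim0 : Tendsto ℓ atTop (nhds 0))
    (R : EuclideanSpace ℝ (Fin d) → ℝ)
    (hR : R = fun w => (1 / (n : ℝ)) * ∑ i, ℓ (y i * ⟪w, x i⟫))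
    (wbar : ℝ → EuclideanSpace ℝ (Fin d))
    (hwbar : ∀ B : ℝ, 0 ≤ B → ‖wbar B‖ ≤ B ∧ ∀ v, ‖v‖ ≤ B → R (wbar B) ≤ R v)
    (ubar : EuclideanSpace ℝ (Fin d)) (hubar : ‖ubar‖ = 1)
    (hlim : Tendsto (fun B : ℝ => B⁻¹ • wbar B) atTop (nhds ubar)) :
    ∀ α : ℝ, 0 < α → ∃ ρ : ℝ, 0 < ρ ∧
      ∀ w : EuclideanSpace ℝ (Fin d), ρ < ‖w‖ →
        R (((1 + α) * ‖w‖) • ubar) ≤ R w :=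
  moving_along_limit_direction_nearly_optimal_general x y hx hy hsep ℓ hconv hdiff hanti hlim0 R hR
    wbar hwbar ubar hlim
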